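/- For every θ ∈ (0,1) and every set F ⊆ ℝ^d, the Assouad spectrum satisfies \overline{dim}_GB F ≤ dim_A^θ F ≤ min{ \overline{dim}_GB F / (1−θ), dim_qA F }. -/

import Mathlib

open Filter Metric Set Topology Bornology ENNReal

noncomputable section

variable {X : Type*} [PseudoMetricSpace X]

/-- `coveringNumber r E` is the smallest number of closed balls of radius `r`
needed to cover `E` (with value `⊤` if no finite cover exists). -/
def coveringNumber (r : ℝ) (E : Set X) : ℕ∞ :=
  sInf {n : ℕ∞ | ∃ t : Finset X, (E ⊆ ⋃ x ∈ t, closedBall x r) ∧ (t.card : ℕ∞) = n}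

/-- The Assouad spectrum `dim_A^θ F`. -/
def assouadSpectrum (θ : ℝ) (F : Set X) : ℝ :=
  sInf {s : ℝ | 0 ≤ s ∧ ∃ C > (0 : ℝ), ∀ R : ℝ, 0 < R → R < 1 → ∀ x ∈ F,
    (coveringNumber (R ^ (1 / θ)) (closedBall x R ∩ F) : ℝ≥0∞)
      ≤ ENNReal.ofReal (C * (R / R ^ (1 / θ)) ^ s)}

/-- The upper spectrum `\overline{dim}_A^θ F`. -/
def upperSpectrum (θ : ℝ) (F : Set X) : ℝ :=
  sInf {s : ℝ | 0 ≤ s ∧ ∃ C > (0 : ℝ), ∀ r R : ℝ, 0 < r → r ≤ R ^ (1 / θ) →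
    R ^ (1 / θ) < R → R < 1 → 0 < R → ∀ x ∈ F,
    (coveringNumber r (closedBall x R ∩ F) : ℝ≥0∞) ≤ ENNReal.ofReal (C * (R / r) ^ s)}

/-- The generalized upper box dimension `\overline{dim}_{GB} F := limsup_{θ → 0⁺} dim_A^θ F`. -/
def genUpperBoxDim (F : Set X) : ℝ :=
  limsup (fun θ : ℝ => assouadSpectrum θ F) (𝓝[>] (0 : ℝ))

/-- The quasi-Assouad dimension `dim_{qA} F := lim_{θ → 1⁻} \overline{dim}_A^θ F`
(the limit exists by monotonicity, hence equals the limsup). -/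
def quasiAssouadDim (F : Set X) : ℝ :=
  limsup (fun θ : ℝ => upperSpectrum θ F) (𝓝[<] (1 : ℝ))

/-- The upper box dimension `\overline{dim}_B F := limsup_{δ → 0⁺} log N_δ(F) / (- log δ)`. -/
def upperBoxDim (F : Set X) : ℝ :=
  limsup (fun δ : ℝ => Real.log ((coveringNumber δ F).toNat : ℝ) / (- Real.log δ))
    (𝓝[>] (0 : ℝ))

/-- The Assouad dimension `dim_A F`. -/
def assouadDim (F : Set X) : ℝ :=
  sInf {s : ℝ | 0 ≤ s ∧ ∃ C > (0 : ℝ), ∃ ρ > (0 : ℝ), ∀ r R : ℝ, 0 < r → r < R → R < ρ →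
    ∀ x ∈ F, (coveringNumber r (closedBall x R ∩ F) : ℝ≥0∞) ≤ ENNReal.ofReal (C * (R / r) ^ s)}

/-- The packing pre-measure at scale `δ`: the supremum of `∑ |B_i|^s` over at most countable
collections of disjoint closed balls of radii at most `δ` (and positive) with centres in `F`,
where `|B_i| = 2 r_i` is the diameter. -/
def packingPre (s δ : ℝ) (F : Set X) : ℝ≥0∞ :=
  ⨆ (D : Set (X × ℝ)) (_ : D.Countable)
    (_ : ∀ p ∈ D, p.1 ∈ F ∧ 0 < p.2 ∧ p.2 ≤ δ)
    (_ : D.Pairwise fun p q => Disjoint (closedBall p.1 p.2) (closedBall q.1 q.2)),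
    ∑' p : D, ENNReal.ofReal ((2 * (p : X × ℝ).2) ^ s)

/-- `𝒫₀^s(F) := lim_{δ → 0} 𝒫_δ^s(F)`; the limit exists by monotonicity and equals the inf. -/
def packingPre₀ (s : ℝ) (F : Set X) : ℝ≥0∞ :=
  ⨅ (δ : ℝ) (_ : 0 < δ), packingPre s δ F

/-- The packing (outer) measure `𝒫^s(F)`. -/
def packingMeasure (s : ℝ) (F : Set X) : ℝ≥0∞ :=
  ⨅ (G : ℕ → Set X) (_ : F ⊆ ⋃ i, G i), ∑' i, packingPre₀ s (G i)

/-- The packing dimension `dim_P F = inf {s ≥ 0 : 𝒫^s(F) = 0}`. -/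
def packingDim (F : Set X) : ℝ :=
  sInf {s : ℝ | 0 ≤ s ∧ packingMeasure s F = 0}

/-!
Two facts drive the proof. Rescaling `R ↦ R ^ (θ₁ / θ₂)` turns a covering bound for `θ₁` into
one for `θ₂ ≥ θ₁`, so that `(1 - θ) dim_A^θ F` is non-increasing in `θ`. Covering first at
scale `R ^ (1 / θ)` and then each piece at scale `R ^ (1 / θ²)` (using the bound again around a
nearby point of `F`, at the cost of a doubling constant) gives `dim_A^{θ²} F ≤ dim_A^θ F`.
Hence `(1 - θ') dim_A^{θ'} F ≤ dim_A^θ F` for all `θ, θ' ∈ (0, 1)`, and letting `θ' → 0` on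
either side gives both bounds involving the generalised box dimension. The bound by `dim_qA F`
holds because `dim_A^θ F ≤ \overline{dim}_A^{θ'} F` for `θ ≤ θ'`. In `ℝ^d` all of these
spectra are at most `d`, by a volume argument, which keeps the limsups finite.
-/

lemma ENat.toENNReal_le_ofReal_iff {n : ℕ∞} {a : ℝ} :
    (n : ℝ≥0∞) ≤ ENNReal.ofReal a ↔ n ≤ ⌊a⌋₊ := by
  induction n using ENat.recTopCoe with
  | top => simp
  | coe k =>
    rcases eq_or_ne k 0 with rfl | hk
    · simp
    rw [ENat.toENNReal_coe, ENNReal.natCast_le_ofReal hk, Nat.cast_le, Nat.le_floor_iff' hk]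

section CoveringNumber

variable {r ρ : ℝ} {E E' : Set X}

lemma coveringNumber_le_card {t : Finset X} (h : E ⊆ ⋃ x ∈ t, closedBall x r) :
    coveringNumber r E ≤ t.card :=
  sInf_le ⟨t, h, rfl⟩

lemma coveringNumber_mono_set (h : E ⊆ E') : coveringNumber r E ≤ coveringNumber r E' :=
  sInf_le_sInf fun _ ⟨t, ht, hc⟩ => ⟨t, h.trans ht, hc⟩

lemma exists_finset_card_le_of_coveringNumber_le {m : ℕ} (h : coveringNumber r E ≤ m) :
    ∃ t : Finset X, E ⊆ ⋃ x ∈ t, closedBall x r ∧ t.card ≤ m := by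
  have hne :
      {n : ℕ∞ | ∃ t : Finset X, E ⊆ ⋃ x ∈ t, closedBall x r ∧ (t.card : ℕ∞) = n}.Nonempty := by
    by_contra hempty
    rw [Set.not_nonempty_iff_eq_empty] at hempty
    rw [_root_.coveringNumber, hempty, sInf_empty, top_le_iff] at h
    exact ENat.natCast_ne_top m h
  obtain ⟨t, ht, hcard⟩ := csInf_mem hne
  exact ⟨t, ht, by exact_mod_cast hcard.trans_le h⟩

lemma coveringNumber_le_mul {m M : ℕ} (hE : coveringNumber ρ E ≤ m)
    (hball : ∀ z, coveringNumber r (closedBall z ρ ∩ E) ≤ M) :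
    coveringNumber r E ≤ (m * M : ℕ) := by
  classical
  obtain ⟨t, ht, htm⟩ := exists_finset_card_le_of_coveringNumber_le hE
  choose u hu huM using fun z => exists_finset_card_le_of_coveringNumber_le (hball z)
  have hcover : E ⊆ ⋃ y ∈ t.biUnion u, closedBall y r := by
    intro x hx
    obtain ⟨z, hz, hxz⟩ := mem_iUnion₂.1 (ht hx)
    obtain ⟨y, hy, hxy⟩ := mem_iUnion₂.1 (hu z ⟨hxz, hx⟩)
    exact mem_iUnion₂.2 ⟨y, Finset.mem_biUnion.2 ⟨z, hz, hy⟩, hxy⟩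
  refine (coveringNumber_le_card hcover).trans (Nat.cast_le.2 ?_)
  calc (t.biUnion u).card ≤ ∑ z ∈ t, (u z).card := Finset.card_biUnion_le
    _ ≤ t.card * M := Finset.sum_le_card_nsmul _ _ _ fun z _ => huM z
    _ ≤ m * M := Nat.mul_le_mul_right M htm

lemma coveringNumber_le_ofReal_mul {a b : ℝ} (ha : 0 ≤ a)
    (hE : (coveringNumber ρ E : ℝ≥0∞) ≤ ENNReal.ofReal a)
    (hball : ∀ z, (coveringNumber r (closedBall z ρ ∩ E) : ℝ≥0∞) ≤ ENNReal.ofReal b) :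
    (coveringNumber r E : ℝ≥0∞) ≤ ENNReal.ofReal (a * b) := by
  have h := coveringNumber_le_mul (ENat.toENNReal_le_ofReal_iff.1 hE)
    fun z => ENat.toENNReal_le_ofReal_iff.1 (hball z)
  calc (coveringNumber r E : ℝ≥0∞) ≤ ((⌊a⌋₊ : ℕ∞) : ℝ≥0∞) * ((⌊b⌋₊ : ℕ∞) : ℝ≥0∞) := by
        rw [← ENat.toENNReal_mul]; exact_mod_cast h
    _ ≤ ENNReal.ofReal a * ENNReal.ofReal b := by
        gcongr <;> exact ENat.toENNReal_le_ofReal_iff.2 le_rfl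
    _ = ENNReal.ofReal (a * b) := (ENNReal.ofReal_mul ha).symm

lemma coveringNumber_le_packingNumber (hr : 0 ≤ r) (E : Set X) :
    coveringNumber r E ≤ Metric.packingNumber r.toNNReal E := by
  by_cases htop : Metric.packingNumber r.toNNReal E = ⊤
  · simp [htop]
  have hfin : (Metric.maximalSeparatedSet r.toNNReal E).Finite := by
    rw [← Set.encard_ne_top_iff, Metric.encard_maximalSeparatedSet htop]; exact htop
  rw [← Metric.encard_maximalSeparatedSet htop, hfin.encard_eq_coe_toFinset_card]
  refine coveringNumber_le_card ?_
  have hcover := (Metric.isCover_iff_subset_iUnion_closedBall).1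
    (Metric.isCover_maximalSeparatedSet htop)
  simpa [Real.coe_toNNReal _ hr] using hcover

end CoveringNumber

variable (X) in
def HasCoveringExponent (D : ℕ) : Prop :=
  ∃ K > (0 : ℝ), ∀ (x : X) (r R : ℝ), 0 < r → r ≤ R →
    (coveringNumber r (closedBall x R) : ℝ≥0∞) ≤ ENNReal.ofReal (K * (R / r) ^ D)

section FiniteDimensional

open MeasureTheory Module

variable {E : Type*} [NormedAddCommGroup E] [NormedSpace ℝ E] [FiniteDimensional ℝ E]

theorem card_le_of_pairwise_lt_dist {x : E} {r R : ℝ} (hr : 0 < r) (hrR : r ≤ R) {s : Finset E}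
    (hs : ∀ a ∈ s, a ∈ closedBall x R) (hsep : (s : Set E).Pairwise fun a b => r < dist a b) :
    (s.card : ℝ) ≤ (3 * (R / r)) ^ finrank ℝ E := by
  set d := finrank ℝ E with hd
  borelize E
  set μ : Measure E := Measure.addHaar
  have hdisj : (s : Set E).PairwiseDisjoint fun a => ball a (r / 2) := fun a ha b hb hab =>
    ball_disjoint_ball (by linarith [hsep ha hb hab])
  have hsub : (⋃ a ∈ s, ball a (r / 2)) ⊆ ball x (3 * R / 2) :=
    iUnion₂_subset fun a ha => ball_subset_ball' (by linarith [mem_closedBall.1 (hs a ha)])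
  have hvol : (s.card : ℝ≥0∞) * ENNReal.ofReal ((r / 2) ^ d) * μ (ball 0 1)
      ≤ ENNReal.ofReal ((3 * R / 2) ^ d) * μ (ball 0 1) :=
    calc (s.card : ℝ≥0∞) * ENNReal.ofReal ((r / 2) ^ d) * μ (ball 0 1)
        = μ (⋃ a ∈ s, ball a (r / 2)) := by
          rw [measure_biUnion_finset hdisj fun a _ => measurableSet_ball]
          simp only [μ.addHaar_ball_of_pos _ (half_pos hr), Finset.sum_const, nsmul_eq_mul,
            mul_assoc, ← hd]
      _ ≤ μ (ball x (3 * R / 2)) := measure_mono hsub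
      _ = ENNReal.ofReal ((3 * R / 2) ^ d) * μ (ball 0 1) := by
          rw [μ.addHaar_ball_of_pos _ (by linarith)]
  have hcard : (s.card : ℝ) * (r / 2) ^ d ≤ (3 * (R / r)) ^ d * (r / 2) ^ d := by
    have h := (ENNReal.mul_le_mul_iff_left (measure_ball_pos μ _ one_pos).ne'
      measure_ball_lt_top.ne).1 hvol
    rw [← ENNReal.ofReal_natCast, ← ENNReal.ofReal_mul (by positivity),
      ENNReal.ofReal_le_ofReal_iff (pow_nonneg (by linarith) _)] at h
    calc (s.card : ℝ) * (r / 2) ^ d ≤ (3 * R / 2) ^ d := h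
      _ = (3 * (R / r)) ^ d * (r / 2) ^ d := by rw [← mul_pow]; field_simp
  exact le_of_mul_le_mul_right hcard (by positivity)

theorem packingNumber_closedBall_le (x : E) {r R : ℝ} (hr : 0 < r) (hrR : r ≤ R) :
    Metric.packingNumber r.toNNReal (closedBall x R) ≤ ⌊(3 * (R / r)) ^ finrank ℝ E⌋₊ := by
  refine iSup₂_le fun C hC => iSup_le fun hsep => ?_
  by_contra! hlt
  obtain ⟨t, htC, htcard⟩ := Set.exists_subset_encard_eq (Order.add_one_le_of_lt hlt)
  have htfin : t.Finite := Set.finite_of_encard_eq_coe htcard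
  have hbound := card_le_of_pairwise_lt_dist hr hrR (s := htfin.toFinset)
    (fun a ha => hC (htC (htfin.mem_toFinset.1 ha)))
    (fun a ha b hb hab => by
      have h := hsep (htC (htfin.mem_toFinset.1 ha)) (htC (htfin.mem_toFinset.1 hb)) hab
      change ENNReal.ofReal r < edist a b at h
      rw [edist_dist] at h
      exact (ENNReal.ofReal_lt_ofReal_iff'.1 h).1)
  rw [htfin.encard_eq_coe_toFinset_card] at htcard
  have hcard : htfin.toFinset.card = ⌊(3 * (R / r)) ^ finrank ℝ E⌋₊ + 1 := by exact_mod_cast htcard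
  rw [hcard, Nat.cast_succ] at hbound
  exact (Nat.lt_floor_add_one _).not_ge hbound

theorem hasCoveringExponent_finrank : HasCoveringExponent E (finrank ℝ E) := by
  refine ⟨3 ^ finrank ℝ E, by positivity, fun x r R hr hrR => ?_⟩
  rw [← mul_pow, ENat.toENNReal_le_ofReal_iff]
  exact (coveringNumber_le_packingNumber hr.le _).trans (packingNumber_closedBall_le x hr hrR)

end FiniteDimensional

lemma rpow_one_div_lt_self {θ R : ℝ} (hθ : θ ∈ Ioo (0 : ℝ) 1) (hR0 : 0 < R) (hR1 : R < 1) :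
    R ^ (1 / θ) < R :=
  Real.rpow_lt_self_of_lt_one hR0 hR1 (one_lt_one_div hθ.1 hθ.2)

lemma div_rpow_one_div_eq {θ R : ℝ} (hR : 0 < R) : R / R ^ (1 / θ) = R ^ (1 - 1 / θ) := by
  rw [Real.rpow_sub hR, Real.rpow_one]

lemma two_mul_rpow_one_div_lt_one {θ R : ℝ} (hθ : 0 < θ) (hR0 : 0 ≤ R) (hR : R < (1 / 2) ^ θ) :
    2 * R ^ (1 / θ) < 1 := by
  have h := Real.rpow_lt_rpow hR0 hR (one_div_pos.2 hθ)
  rw [← Real.rpow_mul (by norm_num), mul_one_div_cancel hθ.ne', Real.rpow_one] at h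
  linarith

lemma rpow_one_div_sq {θ R : ℝ} (hR : 0 ≤ R) : R ^ (1 / θ ^ 2) = (R ^ (1 / θ)) ^ (1 / θ) := by
  rw [← Real.rpow_mul hR, sq, one_div_mul_one_div]

section Spectra

variable {θ θ₁ θ₂ s : ℝ} {F : Set X}

def SpectrumCoveringBound (θ : ℝ) (F : Set X) (δ C s : ℝ) : Prop :=
  ∀ R : ℝ, 0 < R → R < δ → ∀ x ∈ F,
    (coveringNumber (R ^ (1 / θ)) (closedBall x R ∩ F) : ℝ≥0∞)
      ≤ ENNReal.ofReal (C * (R / R ^ (1 / θ)) ^ s)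

def assouadSpectrumExponents (θ : ℝ) (F : Set X) : Set ℝ :=
  {s : ℝ | 0 ≤ s ∧ ∃ C > (0 : ℝ), SpectrumCoveringBound θ F 1 C s}

def upperSpectrumExponents (θ : ℝ) (F : Set X) : Set ℝ :=
  {s : ℝ | 0 ≤ s ∧ ∃ C > (0 : ℝ), ∀ r R : ℝ, 0 < r → r ≤ R ^ (1 / θ) →
    R ^ (1 / θ) < R → R < 1 → 0 < R → ∀ x ∈ F,
    (coveringNumber r (closedBall x R ∩ F) : ℝ≥0∞) ≤ ENNReal.ofReal (C * (R / r) ^ s)}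

lemma assouadSpectrum_eq_sInf : assouadSpectrum θ F = sInf (assouadSpectrumExponents θ F) := rfl

lemma bddBelow_assouadSpectrumExponents : BddBelow (assouadSpectrumExponents θ F) :=
  ⟨0, fun _ hs => hs.1⟩

lemma bddBelow_upperSpectrumExponents : BddBelow (upperSpectrumExponents θ F) :=
  ⟨0, fun _ hs => hs.1⟩

lemma assouadSpectrum_nonneg : 0 ≤ assouadSpectrum θ F :=
  Real.sInf_nonneg fun _ hs => hs.1

lemma SpectrumCoveringBound.coveringNumber_closedBall_inter_le {C ρ : ℝ}
    (h : SpectrumCoveringBound θ F 1 C s) (hρ : 0 < ρ) (hρ1 : 2 * ρ < 1) (z : X) :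
    (coveringNumber ((2 * ρ) ^ (1 / θ)) (closedBall z ρ ∩ F) : ℝ≥0∞)
      ≤ ENNReal.ofReal (C * (2 * ρ / (2 * ρ) ^ (1 / θ)) ^ s) := by
  rcases (closedBall z ρ ∩ F).eq_empty_or_nonempty with hempty | ⟨y, hyz, hy⟩
  · rw [hempty]
    refine (ENat.toENNReal_le.2 (coveringNumber_le_card (t := ∅) (by simp))).trans ?_
    simp
  -- a `ρ`-ball meeting `F` lies in a `2ρ`-ball centred in `F`
  refine (ENat.toENNReal_le.2 (coveringNumber_mono_set ?_)).trans
    (h (2 * ρ) (by positivity) hρ1 y hy)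
  rintro w ⟨hwz, hw⟩
  refine ⟨?_, hw⟩
  have := dist_triangle_right w y z
  rw [mem_closedBall] at hwz hyz ⊢
  linarith

lemma mul_mem_assouadSpectrumExponents (h₁ : θ₁ ∈ Ioo (0 : ℝ) 1) (h₂ : θ₂ ∈ Ioo (0 : ℝ) 1)
    (h12 : θ₁ ≤ θ₂) (hs : s ∈ assouadSpectrumExponents θ₁ F) :
    (1 - θ₁) / (1 - θ₂) * s ∈ assouadSpectrumExponents θ₂ F := by
  obtain ⟨hθ₁0, hθ₁1⟩ := h₁
  obtain ⟨hθ₂0, hθ₂1⟩ := h₂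
  obtain ⟨hs0, C, hC, hbound⟩ := hs
  refine ⟨mul_nonneg (div_nonneg (by linarith) (by linarith)) hs0, C, hC,
    fun R hR0 hR1 x hx => ?_⟩
  -- the scale `R` for `θ₂` is the scale `R' = R ^ (θ₁ / θ₂) ≥ R` for `θ₁`
  set R' := R ^ (θ₁ / θ₂)
  have hR'0 : 0 < R' := Real.rpow_pos_of_pos hR0 _
  have hRR' : R ≤ R' := Real.self_le_rpow_of_le_one hR0.le hR1.le ((div_le_one hθ₂0).2 h12)
  have hradius : R' ^ (1 / θ₁) = R ^ (1 / θ₂) := by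
    rw [← Real.rpow_mul hR0.le]
    congr 1
    field_simp
  have hratio : (R' / R' ^ (1 / θ₁)) ^ s = (R / R ^ (1 / θ₂)) ^ ((1 - θ₁) / (1 - θ₂) * s) := by
    rw [div_rpow_one_div_eq hR'0, div_rpow_one_div_eq hR0, ← Real.rpow_mul hR0.le,
      ← Real.rpow_mul hR0.le, ← Real.rpow_mul hR0.le]
    congr 1
    have : 1 - θ₂ ≠ 0 := by linarith
    field_simp
    ring
  calc (coveringNumber (R ^ (1 / θ₂)) (closedBall x R ∩ F) : ℝ≥0∞)
      ≤ coveringNumber (R' ^ (1 / θ₁)) (closedBall x R' ∩ F) := by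
        rw [hradius]
        exact ENat.toENNReal_le.2
          (coveringNumber_mono_set (inter_subset_inter_left F (closedBall_subset_closedBall hRR')))
    _ ≤ ENNReal.ofReal (C * (R' / R' ^ (1 / θ₁)) ^ s) :=
        hbound R' hR'0 (Real.rpow_lt_one hR0.le hR1 (by positivity)) x hx
    _ = _ := by rw [hratio]

lemma assouadSpectrum_le_mul (h₁ : θ₁ ∈ Ioo (0 : ℝ) 1) (h₂ : θ₂ ∈ Ioo (0 : ℝ) 1) (h12 : θ₁ ≤ θ₂)
    (hne : (assouadSpectrumExponents θ₁ F).Nonempty) :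
    assouadSpectrum θ₂ F ≤ (1 - θ₁) / (1 - θ₂) * assouadSpectrum θ₁ F := by
  have hc : 0 ≤ (1 - θ₁) / (1 - θ₂) := div_nonneg (by linarith [h₁.2]) (by linarith [h₂.2])
  rw [assouadSpectrum_eq_sInf, assouadSpectrum_eq_sInf, ← smul_eq_mul,
    ← Real.sInf_smul_of_nonneg hc]
  exact csInf_le_csInf bddBelow_assouadSpectrumExponents hne.smul_set
    (smul_set_subset_iff.2 fun s hs => mul_mem_assouadSpectrumExponents h₁ h₂ h12 hs)

lemma upperSpectrumExponents_subset {θ θ' : ℝ} (hθ : θ ∈ Ioo (0 : ℝ) 1)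
    (hθ' : θ' ∈ Ioo (0 : ℝ) 1) (hθθ' : θ ≤ θ') :
    upperSpectrumExponents θ' F ⊆ assouadSpectrumExponents θ F := by
  rintro s ⟨hs0, C, hC, hbound⟩
  refine ⟨hs0, C, hC, fun R hR0 hR1 x hx => hbound _ R (by positivity) ?_
    (rpow_one_div_lt_self hθ' hR0 hR1) hR1 hR0 x hx⟩
  exact Real.rpow_le_rpow_of_exponent_ge hR0 hR1.le (one_div_le_one_div_of_le hθ.1 hθθ')

end Spectra

namespace HasCoveringExponent

variable {θ θ' θ₁ θ₂ s : ℝ} {D : ℕ} {F : Set X}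

lemma exists_coveringNumber_inter_le (hX : HasCoveringExponent X D) :
    ∃ K > (0 : ℝ), ∀ (E : Set X) (x : X) (r R : ℝ), 0 < r → r ≤ R →
      (coveringNumber r (closedBall x R ∩ E) : ℝ≥0∞) ≤ ENNReal.ofReal (K * (R / r) ^ D) := by
  obtain ⟨K, hK, hcov⟩ := hX
  exact ⟨K, hK, fun E x r R hr hrR =>
    (ENat.toENNReal_le.2 (coveringNumber_mono_set inter_subset_left)).trans (hcov x r R hr hrR)⟩

lemma natCast_mem_assouadSpectrumExponents (hX : HasCoveringExponent X D)
    (hθ : θ ∈ Ioo (0 : ℝ) 1) : (D : ℝ) ∈ assouadSpectrumExponents θ F := by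
  obtain ⟨K, hK, hcov⟩ := hX.exists_coveringNumber_inter_le
  refine ⟨D.cast_nonneg, K, hK, fun R hR0 hR1 x _ => ?_⟩
  rw [Real.rpow_natCast]
  exact hcov F x _ R (by positivity) (rpow_one_div_lt_self hθ hR0 hR1).le

lemma natCast_mem_upperSpectrumExponents (hX : HasCoveringExponent X D) :
    (D : ℝ) ∈ upperSpectrumExponents θ F := by
  obtain ⟨K, hK, hcov⟩ := hX.exists_coveringNumber_inter_le
  refine ⟨D.cast_nonneg, K, hK, fun r R hr hrR hRR _ _ x _ => ?_⟩
  rw [Real.rpow_natCast]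
  exact hcov F x r R hr (hrR.trans hRR.le)

lemma assouadSpectrum_le (hX : HasCoveringExponent X D) (hθ : θ ∈ Ioo (0 : ℝ) 1) :
    assouadSpectrum θ F ≤ D :=
  csInf_le bddBelow_assouadSpectrumExponents (hX.natCast_mem_assouadSpectrumExponents hθ)

lemma upperSpectrum_le (hX : HasCoveringExponent X D) : upperSpectrum θ F ≤ D :=
  csInf_le bddBelow_upperSpectrumExponents hX.natCast_mem_upperSpectrumExponents

lemma one_sub_mul_assouadSpectrum_le_of_le (hX : HasCoveringExponent X D) (h₁ : θ₁ ∈ Ioo (0 : ℝ) 1)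
    (h₂ : θ₂ ∈ Ioo (0 : ℝ) 1) (h12 : θ₁ ≤ θ₂) :
    (1 - θ₂) * assouadSpectrum θ₂ F ≤ (1 - θ₁) * assouadSpectrum θ₁ F := by
  have h := assouadSpectrum_le_mul h₁ h₂ h12
    ⟨_, hX.natCast_mem_assouadSpectrumExponents (F := F) h₁⟩
  have hθ₂ : 0 < 1 - θ₂ := by linarith [h₂.2]
  calc (1 - θ₂) * assouadSpectrum θ₂ F
      ≤ (1 - θ₂) * ((1 - θ₁) / (1 - θ₂) * assouadSpectrum θ₁ F) := by gcongr
    _ = (1 - θ₁) * assouadSpectrum θ₁ F := by field_simp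

/-- Only small `R` matter: for `R ≥ δ` the ratio `R / R ^ (1 / θ)` is bounded. -/
lemma mem_assouadSpectrumExponents_of_forall_lt (hX : HasCoveringExponent X D)
    (hθ : θ ∈ Ioo (0 : ℝ) 1) (hs : 0 ≤ s) {δ C : ℝ} (hδ : 0 < δ) (hC : 0 < C)
    (hbound : SpectrumCoveringBound θ F δ C s) : s ∈ assouadSpectrumExponents θ F := by
  obtain ⟨K, hK, hcov⟩ := hX.exists_coveringNumber_inter_le
  set M := K * (δ / δ ^ (1 / θ)) ^ D
  have hM : 0 < M := by positivity
  refine ⟨hs, C + M, by positivity, fun R hR0 hR1 x hx => ?_⟩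
  have hratio : 1 ≤ (R / R ^ (1 / θ)) ^ s :=
    Real.one_le_rpow ((one_le_div (by positivity)).2 (rpow_one_div_lt_self hθ hR0 hR1).le) hs
  rcases lt_or_ge R δ with hRδ | hδR
  · refine (hbound R hR0 hRδ x hx).trans (ENNReal.ofReal_le_ofReal ?_)
    gcongr
    linarith
  refine (hcov F x _ R (by positivity) (rpow_one_div_lt_self hθ hR0 hR1).le).trans
    (ENNReal.ofReal_le_ofReal ?_)
  have hexp : 1 - 1 / θ ≤ 0 := by linarith [one_lt_one_div hθ.1 hθ.2]
  have hRδ : R / R ^ (1 / θ) ≤ δ / δ ^ (1 / θ) := by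
    rw [div_rpow_one_div_eq hR0, div_rpow_one_div_eq hδ]
    exact Real.rpow_le_rpow_of_nonpos hδ hδR hexp
  calc K * (R / R ^ (1 / θ)) ^ D ≤ M :=
        mul_le_mul_of_nonneg_left (pow_le_pow_left₀ (by positivity) hRδ D) hK.le
    _ ≤ M * (R / R ^ (1 / θ)) ^ s := le_mul_of_one_le_right hM.le hratio
    _ ≤ (C + M) * (R / R ^ (1 / θ)) ^ s := by gcongr; linarith

lemma exists_spectrumCoveringBound_sq (hX : HasCoveringExponent X D) (hθ : θ ∈ Ioo (0 : ℝ) 1)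
    (hs : 0 ≤ s) {C : ℝ} (hC : 0 < C) (hbound : SpectrumCoveringBound θ F 1 C s) :
    ∃ C' > (0 : ℝ), SpectrumCoveringBound (θ ^ 2) F ((1 / 2) ^ θ) C' s := by
  obtain ⟨K, hK, hcov⟩ := hX.exists_coveringNumber_inter_le
  refine ⟨C * C * K * 2 ^ s * (2 ^ (1 / θ)) ^ D, by positivity, fun R hR0 hRδ x hx => ?_⟩
  set ρ := R ^ (1 / θ)
  set ρ₂ := (2 * ρ) ^ (1 / θ)
  have hρ0 : 0 < ρ := by positivity
  have hρ : 2 * ρ < 1 := two_mul_rpow_one_div_lt_one hθ.1 hR0.le hRδ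
  have hρ₂ : ρ₂ = 2 ^ (1 / θ) * ρ ^ (1 / θ) := Real.mul_rpow (by norm_num) hρ0.le
  have hρr : ρ ^ (1 / θ) ≤ ρ₂ := by
    rw [hρ₂]
    exact le_mul_of_one_le_left (by positivity)
      (Real.one_le_rpow (by norm_num) (one_div_pos.2 hθ.1).le)
  have hρball : ∀ z, (coveringNumber ρ₂ (closedBall z ρ ∩ (closedBall x R ∩ F)) : ℝ≥0∞)
      ≤ ENNReal.ofReal (C * (2 * ρ / ρ₂) ^ s) := fun z =>
    (ENat.toENNReal_le.2 (coveringNumber_mono_set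
      (inter_subset_inter_right _ inter_subset_right))).trans
      (hbound.coveringNumber_closedBall_inter_le hρ0 hρ z)
  have hρ₂ball : ∀ z,
      (coveringNumber (ρ ^ (1 / θ)) (closedBall z ρ₂ ∩ (closedBall x R ∩ F)) : ℝ≥0∞)
        ≤ ENNReal.ofReal (K * (2 ^ (1 / θ)) ^ D) := by
    intro z
    have hratio : ρ₂ / ρ ^ (1 / θ) = 2 ^ (1 / θ) := by
      rw [hρ₂, mul_div_cancel_right₀ _ (by positivity)]
    simpa only [hratio] using hcov _ z _ ρ₂ (by positivity) hρr
  have hR1 : R < 1 := hRδ.trans (Real.rpow_lt_one (by norm_num) (by norm_num) hθ.1)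
  rw [rpow_one_div_sq hR0.le]
  refine (coveringNumber_le_ofReal_mul (by positivity)
    (coveringNumber_le_ofReal_mul (by positivity) (hbound R hR0 hR1 x hx) hρball) hρ₂ball).trans
    (ENNReal.ofReal_le_ofReal ?_)
  have hscale : R / ρ * (2 * ρ / ρ₂) ≤ 2 * (R / ρ ^ (1 / θ)) := by
    have h : R / ρ * (2 * ρ / ρ₂) = 2 * (R / ρ₂) := by field_simp
    rw [h]
    gcongr
  calc C * (R / ρ) ^ s * (C * (2 * ρ / ρ₂) ^ s) * (K * (2 ^ (1 / θ)) ^ D)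
      = C * C * K * (2 ^ (1 / θ)) ^ D * (R / ρ * (2 * ρ / ρ₂)) ^ s := by
        rw [Real.mul_rpow (by positivity) (by positivity)]; ring
    _ ≤ C * C * K * (2 ^ (1 / θ)) ^ D * (2 * (R / ρ ^ (1 / θ))) ^ s := by gcongr
    _ = C * C * K * 2 ^ s * (2 ^ (1 / θ)) ^ D * (R / ρ ^ (1 / θ)) ^ s := by
        rw [Real.mul_rpow (by norm_num) (by positivity)]; ring

lemma mem_assouadSpectrumExponents_sq (hX : HasCoveringExponent X D) (hθ : θ ∈ Ioo (0 : ℝ) 1)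
    (hs : s ∈ assouadSpectrumExponents θ F) : s ∈ assouadSpectrumExponents (θ ^ 2) F := by
  obtain ⟨hs0, C, hC, hbound⟩ := hs
  obtain ⟨C', hC', hbound'⟩ := hX.exists_spectrumCoveringBound_sq hθ hs0 hC hbound
  exact hX.mem_assouadSpectrumExponents_of_forall_lt
    ⟨pow_pos hθ.1 2, pow_lt_one₀ hθ.1.le hθ.2 two_ne_zero⟩ hs0 (by positivity) hC' hbound'

lemma assouadSpectrumExponents_subset_pow_two_pow (hX : HasCoveringExponent X D)
    (hθ : θ ∈ Ioo (0 : ℝ) 1) (n : ℕ) :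
    assouadSpectrumExponents θ F ⊆ assouadSpectrumExponents (θ ^ 2 ^ n) F := by
  induction n with
  | zero => simp
  | succ n ih =>
    rw [pow_succ, pow_mul]
    exact fun s hs => hX.mem_assouadSpectrumExponents_sq
      ⟨pow_pos hθ.1 _, pow_lt_one₀ hθ.1.le hθ.2 (by positivity)⟩ (ih hs)

lemma one_sub_mul_assouadSpectrum_le (hX : HasCoveringExponent X D) (hθ : θ ∈ Ioo (0 : ℝ) 1)
    (hθ' : θ' ∈ Ioo (0 : ℝ) 1) : (1 - θ') * assouadSpectrum θ' F ≤ assouadSpectrum θ F := by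
  obtain ⟨n, hn⟩ := exists_pow_lt_of_lt_one hθ'.1 hθ.2
  have hτ : θ ^ 2 ^ n ∈ Ioo (0 : ℝ) 1 := ⟨pow_pos hθ.1 _, pow_lt_one₀ hθ.1.le hθ.2 (by positivity)⟩
  have hτθ' : θ ^ 2 ^ n ≤ θ' :=
    (pow_le_pow_of_le_one hθ.1.le hθ.2.le Nat.lt_two_pow_self.le).trans hn.le
  calc (1 - θ') * assouadSpectrum θ' F
      ≤ (1 - θ ^ 2 ^ n) * assouadSpectrum (θ ^ 2 ^ n) F :=
        hX.one_sub_mul_assouadSpectrum_le_of_le hτ hθ' hτθ'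
    _ ≤ assouadSpectrum (θ ^ 2 ^ n) F :=
        mul_le_of_le_one_left assouadSpectrum_nonneg (by linarith [hτ.1])
    _ ≤ assouadSpectrum θ F :=
        csInf_le_csInf bddBelow_assouadSpectrumExponents
          ⟨_, hX.natCast_mem_assouadSpectrumExponents hθ⟩
          (hX.assouadSpectrumExponents_subset_pow_two_pow hθ n)

lemma assouadSpectrum_le_upperSpectrum (hX : HasCoveringExponent X D) (hθ : θ ∈ Ioo (0 : ℝ) 1)
    (hθ' : θ' ∈ Ioo (0 : ℝ) 1) (hθθ' : θ ≤ θ') : assouadSpectrum θ F ≤ upperSpectrum θ' F :=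
  csInf_le_csInf bddBelow_assouadSpectrumExponents ⟨_, hX.natCast_mem_upperSpectrumExponents⟩
    (upperSpectrumExponents_subset hθ hθ' hθθ')

lemma genUpperBoxDim_le_assouadSpectrum (hX : HasCoveringExponent X D) (hθ : θ ∈ Ioo (0 : ℝ) 1) :
    genUpperBoxDim F ≤ assouadSpectrum θ F := by
  have hle : (fun θ' => assouadSpectrum θ' F) ≤ᶠ[𝓝[>] 0]
      fun θ' => assouadSpectrum θ F / (1 - θ') := by
    filter_upwards [Ioo_mem_nhdsGT one_pos] with θ' hθ'
    rw [le_div_iff₀' (by linarith [hθ'.2])]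
    exact hX.one_sub_mul_assouadSpectrum_le hθ hθ'
  have hlim : Tendsto (fun θ' => assouadSpectrum θ F / (1 - θ')) (𝓝[>] 0)
      (𝓝 (assouadSpectrum θ F)) := by
    have h : ContinuousAt (fun θ' : ℝ => assouadSpectrum θ F / (1 - θ')) 0 :=
      continuousAt_const.div (continuousAt_const.sub continuousAt_id) (by norm_num)
    simpa using h.tendsto.mono_left nhdsWithin_le_nhds
  calc genUpperBoxDim F ≤ limsup (fun θ' => assouadSpectrum θ F / (1 - θ')) (𝓝[>] 0) :=
        limsup_le_limsup hle (isCoboundedUnder_le_of_eventually_le _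
          (Eventually.of_forall fun _ => assouadSpectrum_nonneg)) hlim.isBoundedUnder_le
    _ = assouadSpectrum θ F := hlim.limsup_eq

lemma one_sub_mul_assouadSpectrum_le_genUpperBoxDim (hX : HasCoveringExponent X D)
    (hθ : θ ∈ Ioo (0 : ℝ) 1) : (1 - θ) * assouadSpectrum θ F ≤ genUpperBoxDim F := by
  have hmem : ∀ᶠ θ' in 𝓝[>] (0 : ℝ), θ' ∈ Ioo (0 : ℝ) 1 := Ioo_mem_nhdsGT one_pos
  exact le_limsup_of_frequently_le
    (hmem.mono fun θ' hθ' => hX.one_sub_mul_assouadSpectrum_le hθ' hθ).frequently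
    (isBoundedUnder_of_eventually_le (hmem.mono fun θ' hθ' => hX.assouadSpectrum_le hθ'))

lemma assouadSpectrum_le_quasiAssouadDim (hX : HasCoveringExponent X D) (hθ : θ ∈ Ioo (0 : ℝ) 1) :
    assouadSpectrum θ F ≤ quasiAssouadDim F := by
  have hle : ∀ᶠ θ' in 𝓝[<] (1 : ℝ), assouadSpectrum θ F ≤ upperSpectrum θ' F := by
    filter_upwards [Ioo_mem_nhdsLT hθ.2] with θ' hθ'
    exact hX.assouadSpectrum_le_upperSpectrum hθ ⟨hθ.1.trans hθ'.1, hθ'.2⟩ hθ'.1.le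
  exact le_limsup_of_frequently_le hle.frequently
    (isBoundedUnder_of_eventually_le (Eventually.of_forall fun _ => hX.upperSpectrum_le))

end HasCoveringExponent

/-- For `θ ∈ (0,1)` and `F ⊆ ℝ^d`:
`\overline{dim}_{GB} F ≤ dim_A^θ F ≤ min (\overline{dim}_{GB} F / (1-θ)) (dim_{qA} F)`. -/
theorem genUpperBoxDim_le_assouadSpectrum_le_min
    (d : ℕ) (θ : ℝ) (hθ : θ ∈ Set.Ioo (0 : ℝ) 1) (F : Set (EuclideanSpace ℝ (Fin d))) :
    genUpperBoxDim F ≤ assouadSpectrum θ F ∧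
      assouadSpectrum θ F ≤ min (genUpperBoxDim F / (1 - θ)) (quasiAssouadDim F) := by
  have hX : HasCoveringExponent (EuclideanSpace ℝ (Fin d)) d := by
    simpa using hasCoveringExponent_finrank (E := EuclideanSpace ℝ (Fin d))
  refine ⟨hX.genUpperBoxDim_le_assouadSpectrum hθ,
    le_min ?_ (hX.assouadSpectrum_le_quasiAssouadDim hθ)⟩
  rw [le_div_iff₀' (by linarith [hθ.2])]
  exact hX.one_sub_mul_assouadSpectrum_le_genUpperBoxDim hθ

end
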